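/- Given α ≥ 0 and β > 0, define g(ζ,α,β) = α·(∫₀^ζ e^{−t²/2} dt + ∫₀^{β/ζ} e^{−t²/2} dt) + (∫₀^ζ e^{−t²/2} dt)·(∫₀^{β/ζ} e^{−t²/2} dt) for ζ > 0. If min{√β, β/r(α)} ≤ ζ < max{√β, β/r(α)} (with β/r(α) interpreted as +∞ when α = 0), then g(·,α,β) is strictly decreasing at ζ, i.e., g is strictly decreasing on that interval. -/

import Mathlib

noncomputable def f (ζ α : ℝ) : ℝ :=
  (1 - ζ ^ 2) * (α + ∫ t in (0:ℝ)..ζ, Real.exp (-t ^ 2 / 2)) - ζ * Real.exp (-ζ ^ 2 / 2)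

noncomputable def g (ζ α β : ℝ) : ℝ :=
  α * ((∫ t in (0:ℝ)..ζ, Real.exp (-t ^ 2 / 2)) +
        ∫ t in (0:ℝ)..(β / ζ), Real.exp (-t ^ 2 / 2)) +
  (∫ t in (0:ℝ)..ζ, Real.exp (-t ^ 2 / 2)) * ∫ t in (0:ℝ)..(β / ζ), Real.exp (-t ^ 2 / 2)

/-!
Write `Φ x = ∫₀^x e^{-t²/2} dt`, `η = β / ζ` and `F x = x e^{-x²/2} / (α + Φ x)`. Differentiating,
`ζ g'(ζ) = (α + Φ ζ) (α + Φ η) (F ζ - F η)`, so `g` decreases at `ζ` exactly when `F ζ < F η`.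
The derivative of `F` is `e^{-x²/2} f(x, α) / (α + Φ x)²`, and `f(·, α)` is strictly decreasing on
`[0, ∞)` since its derivative is `-2x (α + Φ x)`; hence `F` increases on `(0, r]` and decreases on
`(r, ∞)`. On the interval of the theorem either `r < η < ζ` or `ζ < η ≤ r`, and in both cases
`F ζ < F η`. For `α = 0` the zero is `r = 0`, and only the decreasing branch occurs.
-/

open Real Set

noncomputable def Φ (x : ℝ) : ℝ := ∫ t in (0:ℝ)..x, exp (-t ^ 2 / 2)

noncomputable def gaussRatio (α x : ℝ) : ℝ := x * exp (-x ^ 2 / 2) / (α + Φ x)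

lemma hasDerivAt_Φ (x : ℝ) : HasDerivAt Φ (exp (-x ^ 2 / 2)) x := by
  have hc : Continuous fun t : ℝ => exp (-t ^ 2 / 2) := by fun_prop
  exact intervalIntegral.integral_hasDerivAt_right (hc.intervalIntegrable _ _)
    (hc.stronglyMeasurableAtFilter _ _) hc.continuousAt

lemma strictMono_Φ : StrictMono Φ :=
  strictMono_of_deriv_pos fun x => (hasDerivAt_Φ x).deriv ▸ exp_pos _

lemma Φ_zero : Φ 0 = 0 := intervalIntegral.integral_same

lemma add_Φ_pos {α x : ℝ} (hα : 0 ≤ α) (hx : 0 < x) : 0 < α + Φ x := by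
  have := Φ_zero ▸ strictMono_Φ hx
  linarith

lemma hasDerivAt_exp_neg_sq_div_two (x : ℝ) :
    HasDerivAt (fun y : ℝ => exp (-y ^ 2 / 2)) (exp (-x ^ 2 / 2) * -x) x := by
  have h : HasDerivAt (fun y : ℝ => -y ^ 2 / 2) (-x) x := by
    simpa using ((hasDerivAt_pow 2 x).neg.div_const 2).congr_deriv (by ring)
  exact h.exp

lemma hasDerivAt_mul_exp_neg_sq_div_two (x : ℝ) :
    HasDerivAt (fun y : ℝ => y * exp (-y ^ 2 / 2)) ((1 - x ^ 2) * exp (-x ^ 2 / 2)) x :=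
  ((hasDerivAt_id x).mul (hasDerivAt_exp_neg_sq_div_two x)).congr_deriv (by simp only [id]; ring)

lemma f_eq (ζ α : ℝ) : f ζ α = (1 - ζ ^ 2) * (α + Φ ζ) - ζ * exp (-ζ ^ 2 / 2) := rfl

lemma hasDerivAt_f (α x : ℝ) : HasDerivAt (fun ζ => f ζ α) (-(2 * x) * (α + Φ x)) x := by
  have h1 : HasDerivAt (fun ζ : ℝ => 1 - ζ ^ 2) (-(2 * x)) x := by
    simpa using (hasDerivAt_pow 2 x).const_sub 1
  have h := (h1.mul ((hasDerivAt_Φ x).const_add α)).sub (hasDerivAt_mul_exp_neg_sq_div_two x)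
  exact h.congr_deriv (by ring)

lemma f_strictAntiOn {α : ℝ} (hα : 0 ≤ α) : StrictAntiOn (fun ζ => f ζ α) (Ici 0) := by
  refine strictAntiOn_of_deriv_neg (convex_Ici 0)
    (fun x _ => (hasDerivAt_f α x).continuousAt.continuousWithinAt) fun x hx => ?_
  rw [interior_Ici, mem_Ioi] at hx
  rw [(hasDerivAt_f α x).deriv]
  have := mul_pos hx (add_Φ_pos hα hx)
  linarith

lemma f_pos_of_lt {α r x : ℝ} (hα : 0 ≤ α) (hfr : f r α = 0) (hx : 0 ≤ x) (hxr : x < r) :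
    0 < f x α :=
  hfr ▸ f_strictAntiOn hα hx (hx.trans hxr.le) hxr

lemma f_neg_of_lt {α r x : ℝ} (hα : 0 ≤ α) (hr : 0 ≤ r) (hfr : f r α = 0) (hrx : r < x) :
    f x α < 0 :=
  hfr ▸ f_strictAntiOn hα hr (hr.trans hrx.le) hrx

lemma hasDerivAt_gaussRatio {α x : ℝ} (h : α + Φ x ≠ 0) :
    HasDerivAt (gaussRatio α) (exp (-x ^ 2 / 2) * f x α / (α + Φ x) ^ 2) x := by
  have := (hasDerivAt_mul_exp_neg_sq_div_two x).div ((hasDerivAt_Φ x).const_add α) h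
  exact this.congr_deriv (by rw [f_eq]; ring)

lemma continuousOn_gaussRatio {α : ℝ} (hα : 0 ≤ α) : ContinuousOn (gaussRatio α) (Ioi 0) :=
  fun _ hx => (hasDerivAt_gaussRatio (add_Φ_pos hα hx).ne').continuousAt.continuousWithinAt

lemma gaussRatio_strictMonoOn {α r : ℝ} (hα : 0 ≤ α) (hfr : f r α = 0) :
    StrictMonoOn (gaussRatio α) (Ioc 0 r) := by
  refine strictMonoOn_of_deriv_pos (convex_Ioc 0 r)
    ((continuousOn_gaussRatio hα).mono Ioc_subset_Ioi_self) fun x hx => ?_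
  rw [interior_Ioc] at hx
  have hΦ := add_Φ_pos hα hx.1
  rw [(hasDerivAt_gaussRatio hΦ.ne').deriv]
  have := f_pos_of_lt hα hfr hx.1.le hx.2
  positivity

lemma gaussRatio_strictAntiOn {α r : ℝ} (hα : 0 ≤ α) (hr : 0 ≤ r) (hfr : f r α = 0) :
    StrictAntiOn (gaussRatio α) (Ioi r) := by
  refine strictAntiOn_of_deriv_neg (convex_Ioi r)
    ((continuousOn_gaussRatio hα).mono (Ioi_subset_Ioi hr)) fun x hx => ?_
  rw [interior_Ioi] at hx
  have hΦ := add_Φ_pos hα (hr.trans_lt hx)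
  rw [(hasDerivAt_gaussRatio hΦ.ne').deriv]
  exact div_neg_of_neg_of_pos (mul_neg_of_pos_of_neg (exp_pos _) (f_neg_of_lt hα hr hfr hx))
    (by positivity)

lemma hasDerivAt_g {α β ζ : ℝ} (hζ : ζ ≠ 0) (hΦζ : α + Φ ζ ≠ 0) (hΦη : α + Φ (β / ζ) ≠ 0) :
    HasDerivAt (fun z => g z α β)
      ((α + Φ ζ) * (α + Φ (β / ζ)) * (gaussRatio α ζ - gaussRatio α (β / ζ)) / ζ) ζ := by
  have hinv : HasDerivAt (fun z : ℝ => β / z) (-(β / ζ ^ 2)) ζ := by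
    simpa [div_eq_mul_inv] using (hasDerivAt_inv hζ).const_mul β
  have hη := (hasDerivAt_Φ (β / ζ)).comp ζ hinv
  have h := (((hasDerivAt_Φ ζ).add hη).const_mul α).add ((hasDerivAt_Φ ζ).mul hη)
  refine h.congr_deriv ?_
  simp only [gaussRatio, Function.comp_apply]
  field_simp
  ring

lemma g_strictAntiOn {α β r : ℝ} {s : Set ℝ} (hα : 0 ≤ α) (hβ : 0 < β) (hr : 0 ≤ r)
    (hfr : f r α = 0) (hs : Convex ℝ s) (hs0 : s ⊆ Ioi 0)
    (hsr : ∀ ζ ∈ interior s, r < β / ζ ∧ β / ζ < ζ ∨ ζ < β / ζ ∧ β / ζ ≤ r) :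
    StrictAntiOn (fun z => g z α β) s := by
  have hg : ∀ ζ, 0 < ζ → HasDerivAt (fun z => g z α β)
      ((α + Φ ζ) * (α + Φ (β / ζ)) * (gaussRatio α ζ - gaussRatio α (β / ζ)) / ζ) ζ :=
    fun ζ hζ => hasDerivAt_g hζ.ne' (add_Φ_pos hα hζ).ne' (add_Φ_pos hα (div_pos hβ hζ)).ne'
  refine strictAntiOn_of_deriv_neg hs
    (fun ζ hζ => (hg ζ (hs0 hζ)).continuousAt.continuousWithinAt) fun ζ hζ => ?_
  have hζ0 : 0 < ζ := hs0 (interior_subset hζ)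
  have hF : gaussRatio α ζ < gaussRatio α (β / ζ) := by
    rcases hsr ζ hζ with ⟨hrη, hηζ⟩ | ⟨hζη, hηr⟩
    · exact gaussRatio_strictAntiOn hα hr hfr hrη (hrη.trans hηζ) hηζ
    · exact gaussRatio_strictMonoOn hα hfr ⟨hζ0, hζη.le.trans hηr⟩ ⟨hζ0.trans hζη, hηr⟩ hζη
  rw [(hg ζ hζ0).deriv]
  have hΦ := mul_pos (add_Φ_pos hα hζ0) (add_Φ_pos hα (div_pos hβ hζ0))
  exact div_neg_of_neg_of_pos (mul_neg_of_pos_of_neg hΦ (sub_neg.2 hF)) hζ0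

lemma div_lt_self_of_sqrt_lt {β ζ : ℝ} (h : √β < ζ) : β / ζ < ζ := by
  have hζ : 0 < ζ := (sqrt_nonneg β).trans_lt h
  rw [div_lt_iff₀ hζ, ← sq]
  exact (sqrt_lt' hζ).1 h

lemma lt_div_self_of_lt_sqrt {β ζ : ℝ} (hζ : 0 < ζ) (h : ζ < √β) : ζ < β / ζ := by
  rw [lt_div_iff₀ hζ, ← sq]
  exact (lt_sqrt hζ.le).1 h

theorem stmt6_general (α β rα : ℝ) (hβ : 0 < β) (hr0 : 0 ≤ rα) (hrz : f rα α = 0) :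
    (α = 0 → StrictAntiOn (fun ζ => g ζ α β) (Set.Ici (Real.sqrt β))) ∧
    (0 < α → StrictAntiOn (fun ζ => g ζ α β)
        (Set.Ico (min (Real.sqrt β) (β / rα)) (max (Real.sqrt β) (β / rα)))) := by
  have hsβ : 0 < √β := sqrt_pos.2 hβ
  refine ⟨?_, fun hα => ?_⟩
  · rintro rfl
    refine g_strictAntiOn le_rfl hβ le_rfl (by simp [f_eq, Φ_zero]) (convex_Ici _)
      (Ici_subset_Ioi.2 hsβ) fun ζ hζ => ?_
    rw [interior_Ici] at hζ
    have hζ0 : 0 < ζ := hsβ.trans hζ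
    exact Or.inl ⟨by positivity, div_lt_self_of_sqrt_lt hζ⟩
  · have hr : 0 < rα := hr0.lt_of_ne fun h => hα.ne' (by simpa [← h, f_eq, Φ_zero] using hrz)
    have hmin : 0 < min √β (β / rα) := lt_min hsβ (div_pos hβ hr)
    refine g_strictAntiOn hα.le hβ hr0 hrz (convex_Ico _ _)
      (Ico_subset_Ici_self.trans (Ici_subset_Ioi.2 hmin)) fun ζ hζ => ?_
    rw [interior_Ico] at hζ
    have hζ0 : 0 < ζ := hmin.trans hζ.1
    rcases le_total √β (β / rα) with hc | hc
    · rw [min_eq_left hc, max_eq_right hc] at hζ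
      exact Or.inl ⟨(lt_div_comm₀ hr hζ0).2 hζ.2, div_lt_self_of_sqrt_lt hζ.1⟩
    · rw [min_eq_right hc, max_eq_left hc] at hζ
      exact Or.inr ⟨lt_div_self_of_lt_sqrt hζ0 hζ.2, ((div_lt_comm₀ hr hζ0).1 hζ.1).le⟩

theorem stmt6 (α β rα : ℝ) (hα : 0 ≤ α) (hβ : 0 < β) (hr0 : 0 ≤ rα) (hrz : f rα α = 0) :
    (α = 0 → StrictAntiOn (fun ζ => g ζ α β) (Set.Ici (Real.sqrt β))) ∧
    (0 < α → StrictAntiOn (fun ζ => g ζ α β)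
        (Set.Ico (min (Real.sqrt β) (β / rα)) (max (Real.sqrt β) (β / rα)))) :=
  stmt6_general α β rα hβ hr0 hrz
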